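/- Let Φ and h be as in the canonical construction. For every index j ∈ [t], the variable v(j) is never the head of an implicate of h; moreover, every prime implicate of h whose variable set contains v(j) is quadratic, i.e., has exactly two literals (it has the form v(j) → z for some variable z of h other than v(j)). -/

import Mathlib

open Finset

/-- A clause, given by its (fin)sets of positive and negative variables. -/
structure Clause (V : Type*) where
  pos : Finset V
  neg : Finset V
deriving DecidableEq

namespace Clause

variable {V : Type*}

/-- A genuine clause: no variable occurs both positively and negatively. -/
def IsClause (C : Clause V) : Prop := Disjoint C.pos C.neg

/-- Evaluation of a clause (as a disjunction of literals) under an assignment. -/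
def eval (C : Clause V) (a : V → Bool) : Prop :=
  (∃ v ∈ C.pos, a v = true) ∨ (∃ v ∈ C.neg, a v = false)

/-- A pure (definite) Horn clause: exactly one positive literal, its head. -/
def IsPureHorn (C : Clause V) : Prop := ∃ v, C.pos = {v}

end Clause

variable {V : Type*}

/-- Conjunction (as a predicate on assignments) of a set of clauses. -/
def evalSet (S : Set (Clause V)) (a : V → Bool) : Prop := ∀ C ∈ S, C.eval a

/-- Conjunction of the clauses of a CNF, i.e. of a finite set of clauses. -/
def evalCNF (Φ : Finset (Clause V)) (a : V → Bool) : Prop := ∀ C ∈ Φ, C.eval a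

/-- A CNF represents a Boolean function `h`. -/
def Represents (Φ : Finset (Clause V)) (h : (V → Bool) → Prop) : Prop :=
  ∀ a, evalCNF Φ a ↔ h a

/-- A pure Horn CNF: all clauses are pure Horn. -/
def IsPureHornCNF (Φ : Finset (Clause V)) : Prop :=
  ∀ C ∈ Φ, C.IsClause ∧ C.IsPureHorn

/-- The forward chaining closure of a set `Q` of variables with respect to the
pure Horn CNF `Φ`: the smallest set containing `Q` such that whenever `Φ` contains
a clause `S → v` with `S` inside the set, also `v` belongs to it. -/
def fcClosure (Φ : Finset (Clause V)) (Q : Set V) : Set V :=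
  ⋂₀ {T : Set V | Q ⊆ T ∧ ∀ C ∈ Φ, ∀ v : V, C.pos = {v} → ↑C.neg ⊆ T → v ∈ T}

/-- `C` is an implicate of `h`: every assignment falsifying `C` falsifies `h`. -/
def Implicate (h : (V → Bool) → Prop) (C : Clause V) : Prop :=
  ∀ a, ¬ C.eval a → ¬ h a

/-- `C` is a prime implicate of `h`: an implicate from which no literal can be
deleted while remaining an implicate. -/
def PrimeImplicate [DecidableEq V] (h : (V → Bool) → Prop) (C : Clause V) : Prop :=
  C.IsClause ∧ Implicate h C ∧
  (∀ v ∈ C.pos, ¬ Implicate h ⟨C.pos.erase v, C.neg⟩) ∧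
  (∀ v ∈ C.neg, ¬ Implicate h ⟨C.pos, C.neg.erase v⟩)

/-- `C₁` and `C₂` are resolvable on `v`: `v` occurs positively in `C₁`, negatively in
`C₂`, and no other variable occurs with opposite signs in them. -/
def Resolvable (C₁ C₂ : Clause V) (v : V) : Prop :=
  v ∈ C₁.pos ∧ v ∈ C₂.neg ∧
  ∀ w, w ≠ v → ¬(w ∈ C₁.pos ∧ w ∈ C₂.neg) ∧ ¬(w ∈ C₁.neg ∧ w ∈ C₂.pos)

/-- The resolvent `R(C₁,C₂) = (C₁ \ {v}) ∪ (C₂ \ {v̄})`. -/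
def resolventOf [DecidableEq V] (C₁ C₂ : Clause V) (v : V) : Clause V :=
  ⟨C₁.pos.erase v ∪ C₂.pos, C₁.neg ∪ C₂.neg.erase v⟩

/-- A set of clauses closed under resolution. -/
def ResClosed [DecidableEq V] (S : Set (Clause V)) : Prop :=
  ∀ C₁ ∈ S, ∀ C₂ ∈ S, ∀ v, Resolvable C₁ C₂ v → resolventOf C₁ C₂ v ∈ S

/-- The resolution closure of a set of clauses. -/
def resClosure [DecidableEq V] (S : Set (Clause V)) : Set (Clause V) :=
  ⋂₀ {T : Set (Clause V) | S ⊆ T ∧ ResClosed T}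

/-- `I(h)`: the resolution closure of the set of prime implicates of `h`. -/
def implSet [DecidableEq V] (h : (V → Bool) → Prop) : Set (Clause V) :=
  resClosure {C | PrimeImplicate h C}

/-- An exclusive set of clauses of `h`. -/
def ExclusiveSet [DecidableEq V] (h : (V → Bool) → Prop) (Xs : Set (Clause V)) : Prop :=
  Xs ⊆ implSet h ∧
  ∀ C₁ ∈ implSet h, ∀ C₂ ∈ implSet h, ∀ v, Resolvable C₁ C₂ v →
    resolventOf C₁ C₂ v ∈ Xs → C₁ ∈ Xs ∧ C₂ ∈ Xs

/-- The set of variables occurring in a CNF. -/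
def varsOf [DecidableEq V] (Φ : Finset (Clause V)) : Finset V :=
  Φ.biUnion fun C => C.pos ∪ C.neg


/-- A Label Cover instance: a bipartite graph with parts `X` and `Y` and edge set `E`,
label sets `A` (for `X`-vertices) and `B` (for `Y`-vertices), and a nonempty
constraint relation `cst e ⊆ A × B` for every edge `e ∈ E`. -/
structure LabelCover (X Y A B : Type*) where
  E : Finset (X × Y)
  cst : X × Y → Finset (A × B)
  cst_nonempty : ∀ e ∈ E, (cst e).Nonempty

namespace LabelCover

variable {X Y A B : Type*}

/-- A labeling `(f, g)` covers an edge `(x,y)` if for every label `b ∈ g y` there is a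
label `a ∈ f x` with `(a, b)` admissible for the edge. -/
def Covers (I : LabelCover X Y A B) (f : X → Finset A) (g : Y → Finset B)
    (e : X × Y) : Prop :=
  ∀ b ∈ g e.2, ∃ a ∈ f e.1, (a, b) ∈ I.cst e

/-- A total-cover: a labeling (assigning a nonempty label set to every `Y`-vertex)
covering every edge. -/
def IsTotalCover (I : LabelCover X Y A B) (f : X → Finset A) (g : Y → Finset B) : Prop :=
  (∀ y, (g y).Nonempty) ∧ ∀ e ∈ I.E, I.Covers f g e

/-- A total-cover is tight if every `Y`-vertex receives exactly one label. -/
def Tight (g : Y → Finset B) : Prop := ∀ y, (g y).card = 1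

end LabelCover

/-- The cost of a labeling: the average number of labels assigned to `X`-vertices. -/
def lcCost {X A : Type*} [Fintype X] (f : X → Finset A) : ℚ :=
  (∑ x, ((f x).card : ℚ)) / (Fintype.card X : ℚ)


/-- The labels of the refined Label Cover instance: `L ∪ L′`, where `L = ⋃_x L_x`
with `L_x = {x} × A` and `L′ = ⋃_y L′_y` with `L′_y = {y} × B`. -/
abbrev Lab (X Y A B : Type*) := (X × A) ⊕ (Y × B)

/-- The propositional variables of the canonical pure Horn CNF construction:
`u ℓ` for labels `ℓ ∈ L ∪ L′`, `e x y i` and `el x y ℓ′ i` for edges `(x,y)`,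
labels `ℓ′ ∈ L′_y` and indices `i ∈ [d]`, and `v j` for `j ∈ [t]`. -/
inductive PV (X Y A B : Type*) where
  | u : Lab X Y A B → PV X Y A B
  | e : X → Y → ℕ → PV X Y A B
  | el : X → Y → B → ℕ → PV X Y A B
  | v : ℕ → PV X Y A B
deriving DecidableEq

section Canonical

variable {X Y A B : Type*} [Fintype X] [Fintype Y] [Fintype A] [Fintype B]
  [DecidableEq X] [DecidableEq Y] [DecidableEq A] [DecidableEq B]

/-- The (open) neighborhood `N(y) = {z ∈ X : (z,y) ∈ E}`. -/
def Nbr (I : LabelCover X Y A B) (y : Y) : Finset X :=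
  Finset.univ.filter fun z => (z, y) ∈ I.E

/-- Clauses (a): `u(ℓ) ∧ u(ℓ′) → e(x,y,ℓ′,i)` for `(x,y) ∈ E`, `(ℓ,ℓ′) ∈ Π_{(x,y)}`,
`i ∈ [d]`. -/
def clA (I : LabelCover X Y A B) (d : ℕ) : Finset (Clause (PV X Y A B)) :=
  (I.E ×ˢ Finset.Icc 1 d).biUnion fun p =>
    (I.cst p.1).image fun ab =>
      ⟨{PV.el p.1.1 p.1.2 ab.2 p.2},
       {PV.u (Sum.inl (p.1.1, ab.1)), PV.u (Sum.inr (p.1.2, ab.2))}⟩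

/-- Clauses (b): `⋀_{z ∈ N(y)} e(z,y,ℓ′,i) → e(x,y,i)` for `(x,y) ∈ E`, `ℓ′ ∈ L′_y`,
`i ∈ [d]`. -/
def clB (I : LabelCover X Y A B) (d : ℕ) : Finset (Clause (PV X Y A B)) :=
  ((I.E ×ˢ (Finset.univ : Finset B)) ×ˢ Finset.Icc 1 d).image fun p =>
    ⟨{PV.e p.1.1.1 p.1.1.2 p.2},
     (Nbr I p.1.1.2).image fun z => PV.el z p.1.1.2 p.1.2 p.2⟩

/-- Clauses (c): `e(x,y,i) → e(x,y,ℓ′,i)` for `(x,y) ∈ E`, `ℓ′ ∈ L′_y`, `i ∈ [d]`. -/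
def clC (I : LabelCover X Y A B) (d : ℕ) : Finset (Clause (PV X Y A B)) :=
  ((I.E ×ˢ (Finset.univ : Finset B)) ×ˢ Finset.Icc 1 d).image fun p =>
    ⟨{PV.el p.1.1.1 p.1.1.2 p.1.2 p.2}, {PV.e p.1.1.1 p.1.1.2 p.2}⟩

/-- The common body of the clauses (d): all variables `e(x,y,i)`, `(x,y) ∈ E`, `i ∈ [d]`. -/
def bigBody (I : LabelCover X Y A B) (d : ℕ) : Finset (PV X Y A B) :=
  (I.E ×ˢ Finset.Icc 1 d).image fun p => PV.e p.1.1 p.1.2 p.2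

/-- Clauses (d): `⋀_{i ∈ [d]} ⋀_{(x,y) ∈ E} e(x,y,i) → u(ℓ)` for `ℓ ∈ L ∪ L′`. -/
def clD (I : LabelCover X Y A B) (d : ℕ) : Finset (Clause (PV X Y A B)) :=
  (Finset.univ : Finset (Lab X Y A B)).image fun ℓ => ⟨{PV.u ℓ}, bigBody I d⟩

/-- Clauses (e): `v(j) → u(ℓ)` for `j ∈ [t]`, `ℓ ∈ L ∪ L′`. -/
def clE (X Y A B : Type*) [Fintype X] [Fintype Y] [Fintype A] [Fintype B]
    [DecidableEq X] [DecidableEq Y] [DecidableEq A] [DecidableEq B]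
    (t : ℕ) : Finset (Clause (PV X Y A B)) :=
  (Finset.Icc 1 t ×ˢ (Finset.univ : Finset (Lab X Y A B))).image fun p =>
    ⟨{PV.u p.2}, {PV.v p.1}⟩

/-- The canonical formula `Ψ`: clauses of types (a)–(d). -/
def PsiCNF (I : LabelCover X Y A B) (d : ℕ) : Finset (Clause (PV X Y A B)) :=
  clA I d ∪ clB I d ∪ clC I d ∪ clD I d

/-- The canonical formula `Φ`: clauses of types (a)–(e). -/
def PhiCNF (I : LabelCover X Y A B) (d t : ℕ) : Finset (Clause (PV X Y A B)) :=
  PsiCNF I d ∪ clE X Y A B t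

/-- The pure Horn function `h` represented by the canonical formula `Φ`. -/
def hFun (I : LabelCover X Y A B) (d t : ℕ) : (PV X Y A B → Bool) → Prop :=
  fun a => evalCNF (PhiCNF I d t) a

/-- The pure Horn function `g` represented by the canonical formula `Ψ`. -/
def gFun (I : LabelCover X Y A B) (d : ℕ) : (PV X Y A B → Bool) → Prop :=
  fun a => evalCNF (PsiCNF I d) a

end Canonical

/-!
Since `Φ` is pure Horn, its models are closed under meets and contain the all-true
assignment; hence every prime implicate has a single head, and `S → z` is an implicate
exactly when forward chaining from `S` reaches `z`. No clause of `Φ` has head `v(j)`, so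
`v(j)` is never reached from a set not containing it. Conversely, given a total cover,
forward chaining from `v(j)` alone reaches every head of `Φ`: first all `u(ℓ)` by (e),
then `e(x,y,ℓ′,i)` for the covering labels `ℓ′` by (a), then every `e(x,y,i)` by (b), and
finally every `e(x,y,ℓ′,i)` by (c). So a prime implicate `S → z` with `v(j) ∈ S` already
follows from `v(j) → z`, and primality forces `S = {v(j)}`.
-/

section ForwardChaining

variable {Φ : Finset (Clause V)}

lemma subset_fcClosure (Q : Set V) : Q ⊆ fcClosure Φ Q :=
  fun _ hw => Set.mem_sInter.2 fun _ hT => hT.1 hw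

lemma fcClosure_subset {Q T : Set V} (hQ : Q ⊆ T)
    (hT : ∀ C ∈ Φ, ∀ v : V, C.pos = {v} → ↑C.neg ⊆ T → v ∈ T) :
    fcClosure Φ Q ⊆ T :=
  fun _ hw => Set.mem_sInter.1 hw T ⟨hQ, hT⟩

lemma mem_fcClosure_of_mem {Q : Set V} {C : Clause V} (hC : C ∈ Φ) {v : V}
    (hv : C.pos = {v}) (hneg : ↑C.neg ⊆ fcClosure Φ Q) : v ∈ fcClosure Φ Q :=
  Set.mem_sInter.2 fun T hT =>
    hT.2 C hC v hv (hneg.trans fun _ hw => Set.mem_sInter.1 hw T hT)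

lemma fcClosure_mono {Q Q' : Set V} (h : Q ⊆ Q') : fcClosure Φ Q ⊆ fcClosure Φ Q' :=
  fcClosure_subset (h.trans (subset_fcClosure Q')) fun _ hC _ hv hneg =>
    mem_fcClosure_of_mem hC hv hneg

lemma exists_mem_pos_of_mem_fcClosure {Q : Set V} {z : V} (hz : z ∈ fcClosure Φ Q)
    (hzQ : z ∉ Q) : ∃ C ∈ Φ, z ∈ C.pos := by
  by_contra! hhead
  have : fcClosure Φ Q ⊆ {z}ᶜ :=
    fcClosure_subset (fun w hw => by rintro rfl; exact hzQ hw)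
      fun C hC v hv _ => by rintro rfl; exact hhead C hC (by simp [hv])
  exact this hz rfl

lemma implicate_iff_mem_fcClosure (hΦ : ∀ C ∈ Φ, C.IsPureHorn) (S : Finset V) (z : V) :
    Implicate (evalCNF Φ) ⟨{z}, S⟩ ↔ z ∈ fcClosure Φ ↑S := by
  classical
  simp only [Implicate, Clause.eval, Finset.mem_singleton, exists_eq_left, not_or,
    not_exists, not_and, Bool.not_eq_true, Bool.not_eq_false]
  constructor
  · intro himp
    by_contra hz
    -- The indicator of the closure is a model of `Φ` that falsifies `S → z`.
    refine himp (fun w => decide (w ∈ fcClosure Φ ↑S)) ⟨by simpa using hz,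
      fun w hw => by simpa using subset_fcClosure (Φ := Φ) ↑S hw⟩ fun C hC => ?_
    obtain ⟨v, hv⟩ := hΦ C hC
    by_cases hneg : (↑C.neg : Set V) ⊆ fcClosure Φ ↑S
    · exact Or.inl ⟨v, by simp [hv], by simpa using mem_fcClosure_of_mem hC hv hneg⟩
    · obtain ⟨w, hwC, hw⟩ := Set.not_subset.1 hneg
      exact Or.inr ⟨w, hwC, by simpa using hw⟩
  · rintro hz a ⟨haz, haS⟩ ha
    have hmodel : fcClosure Φ ↑S ⊆ {w | a w = true} :=
      fcClosure_subset (fun w hw => haS w hw) fun C hC v hv hneg => by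
        rcases ha C hC with ⟨w, hw, haw⟩ | ⟨w, hw, haw⟩
        · rwa [hv, Finset.mem_singleton.1 hw] at *
        · exact absurd (hneg hw) (by simp [haw])
    exact absurd (hmodel hz) (by simp [haz])

lemma evalCNF_and (hΦ : ∀ C ∈ Φ, C.IsPureHorn) {a b : V → Bool}
    (ha : evalCNF Φ a) (hb : evalCNF Φ b) : evalCNF Φ fun w => a w && b w := by
  intro C hC
  obtain ⟨v, hv⟩ := hΦ C hC
  have head_of_body : ∀ c : V → Bool, C.eval c → (∀ w ∈ C.neg, c w = true) → c v = true := by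
    rintro c (⟨w, hw, hcw⟩ | ⟨w, hw, hcw⟩) hbody
    · rwa [hv, Finset.mem_singleton.1 hw] at *
    · simp [hbody w hw] at hcw
  by_cases hbody : ∃ w ∈ C.neg, (a w && b w) = false
  · exact Or.inr hbody
  · simp only [not_exists, not_and, Bool.not_eq_false, Bool.and_eq_true] at hbody
    refine Or.inl ⟨v, by simp [hv], ?_⟩
    simp only [Bool.and_eq_true]
    exact ⟨head_of_body a (ha C hC) fun w hw => (hbody w hw).1,
      head_of_body b (hb C hC) fun w hw => (hbody w hw).2⟩

lemma evalCNF_const_true (hΦ : ∀ C ∈ Φ, C.IsPureHorn) : evalCNF Φ fun _ => true :=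
  fun C hC => by
    obtain ⟨v, hv⟩ := hΦ C hC
    exact Or.inl ⟨v, by simp [hv], rfl⟩

end ForwardChaining

section PrimeImplicate

variable [DecidableEq V]

lemma PrimeImplicate.exists_model {h : (V → Bool) → Prop} {C : Clause V}
    (hC : PrimeImplicate h C) {r : V} (hr : r ∈ C.pos) :
    ∃ a, h a ∧ a r = true ∧ (∀ w ∈ C.pos, w ≠ r → a w = false) ∧
      ∀ w ∈ C.neg, a w = true := by
  obtain ⟨-, himp, hpos, -⟩ := hC
  obtain ⟨a, hna, ha⟩ : ∃ a, ¬ Clause.eval ⟨C.pos.erase r, C.neg⟩ a ∧ h a := by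
    simpa [Implicate] using hpos r hr
  simp only [Clause.eval, Finset.mem_erase, not_or, not_exists, not_and,
    Bool.not_eq_true, Bool.not_eq_false] at hna
  have hposf : ∀ w ∈ C.pos, w ≠ r → a w = false := fun w hw hwr => hna.1 w ⟨hwr, hw⟩
  refine ⟨a, ha, ?_, hposf, hna.2⟩
  by_contra har
  refine himp a ?_ ha
  rintro (⟨w, hw, haw⟩ | ⟨w, hw, haw⟩)
  · obtain rfl | hwr := eq_or_ne w r
    · exact har haw
    · simp [hposf w hw hwr] at haw
  · simp [hna.2 w hw] at haw

variable {Φ : Finset (Clause V)}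

lemma PrimeImplicate.pos_eq_singleton (hΦ : ∀ C ∈ Φ, C.IsPureHorn) {C : Clause V}
    (hC : PrimeImplicate (evalCNF Φ) C) : ∃ z, C.pos = {z} := by
  obtain ⟨p, hp⟩ : C.pos.Nonempty := by
    rw [Finset.nonempty_iff_ne_empty]
    intro hempty
    exact hC.2.1 (fun _ => true) (by simp [Clause.eval, hempty]) (evalCNF_const_true hΦ)
  refine ⟨p, Finset.eq_singleton_iff_unique_mem.2 ⟨hp, fun q hq => ?_⟩⟩
  by_contra hqp
  obtain ⟨a, ha, -, hapos, haneg⟩ := hC.exists_model hp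
  obtain ⟨b, hb, -, hbpos, hbneg⟩ := hC.exists_model hq
  refine hC.2.1 (fun w => a w && b w) ?_ (evalCNF_and hΦ ha hb)
  rintro (⟨w, hw, hab⟩ | ⟨w, hw, hab⟩)
  · obtain rfl | hwp := eq_or_ne w p
    · simp [hbpos w hw (Ne.symm hqp)] at hab
    · simp [hapos w hw hwp] at hab
  · simp [haneg w hw, hbneg w hw] at hab

lemma PrimeImplicate.neg_eq_singleton (hΦ : ∀ C ∈ Φ, C.IsPureHorn) {z w : V} {S : Finset V}
    (hC : PrimeImplicate (evalCNF Φ) ⟨{z}, S⟩) (hw : w ∈ S) (hz : z ∈ fcClosure Φ {w}) :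
    S = {w} := by
  refine Finset.eq_singleton_iff_unique_mem.2 ⟨hw, fun w' hw' => ?_⟩
  by_contra hne
  refine hC.2.2.2 w' hw' ((implicate_iff_mem_fcClosure hΦ _ _).2 ?_)
  refine fcClosure_mono ?_ hz
  simpa [hw] using Ne.symm hne

end PrimeImplicate

section Canonical

variable {X Y A B : Type*}

/-- The heads of the clauses of `PhiCNF I d t`. -/
def IsHeadVar (I : LabelCover X Y A B) (d : ℕ) : PV X Y A B → Prop
  | .u _ => True
  | .e x y i | .el x y _ i => (x, y) ∈ I.E ∧ i ∈ Finset.Icc 1 d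
  | .v _ => False

lemma IsHeadVar.ne_v {I : LabelCover X Y A B} {d : ℕ} {z : PV X Y A B}
    (hz : IsHeadVar I d z) (j : ℕ) : z ≠ PV.v j := by
  rintro rfl
  exact hz

variable [Fintype X] [Fintype Y] [Fintype A] [Fintype B]
  [DecidableEq X] [DecidableEq Y] [DecidableEq A] [DecidableEq B]
  {I : LabelCover X Y A B} {d t j : ℕ}

lemma exists_pos_eq_singleton_isHeadVar {C : Clause (PV X Y A B)} (hC : C ∈ PhiCNF I d t) :
    ∃ z, C.pos = {z} ∧ IsHeadVar I d z := by
  simp only [PhiCNF, PsiCNF, clA, clB, clC, clD, clE, Finset.mem_union, Finset.mem_biUnion,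
    Finset.mem_image, Finset.mem_product] at hC
  rcases hC with ((((⟨p, hp, -, -, rfl⟩ | ⟨p, hp, rfl⟩) | ⟨p, hp, rfl⟩) | ⟨ℓ, -, rfl⟩) |
    ⟨p, -, rfl⟩)
  · exact ⟨_, rfl, hp⟩
  · exact ⟨_, rfl, hp.1.1, hp.2⟩
  · exact ⟨_, rfl, hp.1.1, hp.2⟩
  · exact ⟨_, rfl, trivial⟩
  · exact ⟨_, rfl, trivial⟩

lemma isPureHorn_of_mem_phiCNF {C : Clause (PV X Y A B)} (hC : C ∈ PhiCNF I d t) :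
    C.IsPureHorn :=
  (exists_pos_eq_singleton_isHeadVar hC).imp fun _ hz => hz.1

lemma isHeadVar_of_implicate {S : Finset (PV X Y A B)} {z : PV X Y A B}
    (himp : Implicate (evalCNF (PhiCNF I d t)) ⟨{z}, S⟩) (hzS : z ∉ S) :
    IsHeadVar I d z ∧ z ∈ varsOf (PhiCNF I d t) := by
  obtain ⟨D, hD, hzD⟩ := exists_mem_pos_of_mem_fcClosure
    ((implicate_iff_mem_fcClosure (fun _ => isPureHorn_of_mem_phiCNF) S z).1 himp)
    (by simpa using hzS)
  obtain ⟨z', hD', hz'⟩ := exists_pos_eq_singleton_isHeadVar hD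
  obtain rfl : z = z' := by simpa [hD'] using hzD
  exact ⟨hz', Finset.mem_biUnion.2 ⟨D, hD, Finset.mem_union_left _ hzD⟩⟩

lemma u_mem_fcClosure_v (hj : j ∈ Finset.Icc 1 t) (ℓ : Lab X Y A B) :
    PV.u ℓ ∈ fcClosure (PhiCNF I d t) {PV.v j} := by
  refine mem_fcClosure_of_mem (C := ⟨{PV.u ℓ}, {PV.v j}⟩) ?_ rfl (by simp [subset_fcClosure])
  simp only [PhiCNF, clE, Finset.mem_union, Finset.mem_image]
  exact Or.inr ⟨(j, ℓ), by simp [hj], rfl⟩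

lemma el_mem_fcClosure_v_of_mem_cst (hj : j ∈ Finset.Icc 1 t) {x : X} {y : Y} {a : A} {b : B}
    {i : ℕ} (hxy : (x, y) ∈ I.E) (hab : (a, b) ∈ I.cst (x, y)) (hi : i ∈ Finset.Icc 1 d) :
    PV.el x y b i ∈ fcClosure (PhiCNF I d t) {PV.v j} := by
  refine mem_fcClosure_of_mem (C := ⟨{PV.el x y b i},
    {PV.u (.inl (x, a)), PV.u (.inr (y, b))}⟩) ?_ rfl ?_
  · simp only [PhiCNF, PsiCNF, clA, Finset.mem_union, Finset.mem_biUnion, Finset.mem_image]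
    exact Or.inl <| Or.inl <| Or.inl <| Or.inl ⟨((x, y), i), by simp [hxy, hi], (a, b), hab, rfl⟩
  · simp [Set.insert_subset_iff, u_mem_fcClosure_v hj]

lemma e_mem_fcClosure_v (hj : j ∈ Finset.Icc 1 t) {f : X → Finset A} {g : Y → Finset B}
    (hcover : I.IsTotalCover f g) {x : X} {y : Y} {i : ℕ} (hxy : (x, y) ∈ I.E)
    (hi : i ∈ Finset.Icc 1 d) : PV.e x y i ∈ fcClosure (PhiCNF I d t) {PV.v j} := by
  obtain ⟨b, hb⟩ := hcover.1 y
  refine mem_fcClosure_of_mem (C := ⟨{PV.e x y i}, (Nbr I y).image fun z => PV.el z y b i⟩)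
    ?_ rfl ?_
  · simp only [PhiCNF, PsiCNF, clB, Finset.mem_union, Finset.mem_image]
    exact Or.inl <| Or.inl <| Or.inl <| Or.inr ⟨(((x, y), b), i), by simp [hxy, hi], rfl⟩
  · intro w hw
    simp only [Finset.coe_image, Set.mem_image, Finset.mem_coe, Nbr, Finset.mem_filter,
      Finset.mem_univ, true_and] at hw
    obtain ⟨z, hzy, rfl⟩ := hw
    obtain ⟨a, -, hab⟩ := hcover.2 (z, y) hzy b hb
    exact el_mem_fcClosure_v_of_mem_cst hj hzy hab hi

lemma el_mem_fcClosure_v (hj : j ∈ Finset.Icc 1 t) {f : X → Finset A} {g : Y → Finset B}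
    (hcover : I.IsTotalCover f g) {x : X} {y : Y} (b : B) {i : ℕ} (hxy : (x, y) ∈ I.E)
    (hi : i ∈ Finset.Icc 1 d) : PV.el x y b i ∈ fcClosure (PhiCNF I d t) {PV.v j} := by
  refine mem_fcClosure_of_mem (C := ⟨{PV.el x y b i}, {PV.e x y i}⟩) ?_ rfl ?_
  · simp only [PhiCNF, PsiCNF, clC, Finset.mem_union, Finset.mem_image]
    exact Or.inl <| Or.inl <| Or.inr ⟨(((x, y), b), i), by simp [hxy, hi], rfl⟩
  · simpa using e_mem_fcClosure_v hj hcover hxy hi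

lemma IsHeadVar.mem_fcClosure_v (hj : j ∈ Finset.Icc 1 t) {f : X → Finset A}
    {g : Y → Finset B} (hcover : I.IsTotalCover f g) {z : PV X Y A B} (hz : IsHeadVar I d z) :
    z ∈ fcClosure (PhiCNF I d t) {PV.v j} := by
  cases z with
  | u ℓ => exact u_mem_fcClosure_v hj ℓ
  | e x y i => exact e_mem_fcClosure_v hj hcover hz.1 hz.2
  | el x y b i => exact el_mem_fcClosure_v hj hcover b hz.1 hz.2
  | v => exact hz.elim

end Canonical

theorem vj_prime_implicates_quadratic_general
    {X Y A B : Type*} [Fintype X] [Fintype Y] [Fintype A] [Fintype B]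
    [DecidableEq X] [DecidableEq Y] [DecidableEq A] [DecidableEq B]
    (I : LabelCover X Y A B) (d t : ℕ)
    (hfeas : ∃ f g, I.IsTotalCover f g) :
    ∀ j ∈ Finset.Icc 1 t,
      (∀ C : Clause (PV X Y A B), C.IsClause → C.IsPureHorn →
        Implicate (hFun I d t) C → PV.v j ∉ C.pos) ∧
      (∀ C : Clause (PV X Y A B), PrimeImplicate (hFun I d t) C →
        PV.v j ∈ C.pos ∪ C.neg →
        ∃ z ∈ varsOf (PhiCNF I d t), z ≠ PV.v j ∧
          C = ⟨{z}, {PV.v j}⟩) := by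
  intro j hj
  obtain ⟨f, g, hcover⟩ := hfeas
  have hHorn : ∀ C ∈ PhiCNF I d t, C.IsPureHorn := fun _ => isPureHorn_of_mem_phiCNF
  have hv_not_head : ∀ C : Clause (PV X Y A B), C.IsClause → C.IsPureHorn →
      Implicate (hFun I d t) C → PV.v j ∉ C.pos := by
    rintro ⟨pos, neg⟩ hcl ⟨z, rfl : pos = {z}⟩ himp hvj
    obtain rfl : PV.v j = z := Finset.mem_singleton.1 hvj
    exact (isHeadVar_of_implicate himp (Finset.disjoint_left.1 hcl hvj)).1.ne_v j rfl
  refine ⟨hv_not_head, fun C hC hvj => ?_⟩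
  obtain ⟨z, hz⟩ := hC.pos_eq_singleton hHorn
  obtain ⟨pos, neg⟩ := C
  obtain rfl : pos = {z} := hz
  have hvneg : PV.v j ∈ neg :=
    (Finset.mem_union.1 hvj).resolve_left (hv_not_head _ hC.1 ⟨z, rfl⟩ hC.2.1)
  obtain ⟨hzhead, hzvars⟩ :=
    isHeadVar_of_implicate hC.2.1 (Finset.disjoint_left.1 hC.1 (Finset.mem_singleton_self z))
  refine ⟨z, hzvars, hzhead.ne_v j, ?_⟩
  rw [hC.neg_eq_singleton hHorn hvneg (hzhead.mem_fcClosure_v hj hcover)]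

/-- In the canonical construction (for a feasible Label Cover
instance), for every `j ∈ [t]` the variable `v(j)` is never the head of a (pure
Horn) implicate of `h`, and every prime implicate of `h` whose variable set contains
`v(j)` is quadratic, of the form `v(j) → z` for some variable `z` of `h` other
than `v(j)`. -/
theorem vj_prime_implicates_quadratic
    {X Y A B : Type*} [Fintype X] [Fintype Y] [Fintype A] [Fintype B]
    [DecidableEq X] [DecidableEq Y] [DecidableEq A] [DecidableEq B]
    [Nonempty X] [Nonempty Y]
    (I : LabelCover X Y A B) (d t : ℕ) (hd : 1 ≤ d) (ht : 1 ≤ t)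
    (hnoIsoX : ∀ x : X, ∃ y, (x, y) ∈ I.E)
    (hnoIsoY : ∀ y : Y, ∃ x, (x, y) ∈ I.E)
    (hfeas : ∃ f g, I.IsTotalCover f g) :
    ∀ j ∈ Finset.Icc 1 t,
      (∀ C : Clause (PV X Y A B), C.IsClause → C.IsPureHorn →
        Implicate (hFun I d t) C → PV.v j ∉ C.pos) ∧
      (∀ C : Clause (PV X Y A B), PrimeImplicate (hFun I d t) C →
        PV.v j ∈ C.pos ∪ C.neg →
        ∃ z ∈ varsOf (PhiCNF I d t), z ≠ PV.v j ∧
          C = ⟨{z}, {PV.v j}⟩) :=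
  vj_prime_implicates_quadratic_general I d t hfeas
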